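/- Let 𝓛₂ be the derivation of ℂ[x₂, x₃, x₄] with 𝓛₂(x₂) = (2/3)x₄ - 2x₂², 𝓛₂(x₃) = 3x₂x₃, 𝓛₂(x₄) = 2x₂x₄ + 3x₃². Then applying 𝓛₂ to the polynomials λ₄ = -3x₂² + (1/2)x₄ and λ₆ = 2x₂³ + (1/4)x₃² - (1/2)x₂x₄ gives 𝓛₂(λ₄) = 6λ₆ and 𝓛₂(λ₆) = -(4/3)λ₄², i.e., 𝓛₂ is projectable for p with pushforward L₂. -/
import Mathlib


open MvPolynomial

noncomputable abbrev x2 : MvPolynomial (Fin 3) ℂ := X 0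
noncomputable abbrev x3 : MvPolynomial (Fin 3) ℂ := X 1
noncomputable abbrev x4 : MvPolynomial (Fin 3) ℂ := X 2

/-- `p*(λ₄) = -3x₂² + (1/2)x₄`. -/
noncomputable def pl4 : MvPolynomial (Fin 3) ℂ := -3 * x2 ^ 2 + (1 / 2 : ℂ) • x4

/-- `p*(λ₆) = 2x₂³ + (1/4)x₃² - (1/2)x₂x₄`. -/
noncomputable def pl6 : MvPolynomial (Fin 3) ℂ :=
  2 * x2 ^ 3 + (1 / 4 : ℂ) • x3 ^ 2 - (1 / 2 : ℂ) • (x2 * x4)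

/-- `𝓛₂` with `𝓛₂(x₂) = (2/3)x₄ - 2x₂²`, `𝓛₂(x₃) = 3x₂x₃`, `𝓛₂(x₄) = 2x₂x₄ + 3x₃²`. -/
noncomputable def L2 : Derivation ℂ (MvPolynomial (Fin 3) ℂ) (MvPolynomial (Fin 3) ℂ) :=
  mkDerivation ℂ ![(2 / 3 : ℂ) • x4 - 2 * x2 ^ 2, 3 * x2 * x3, 2 * x2 * x4 + 3 * x3 ^ 2]

lemma derivation_map_ofNat
    (E : Derivation ℂ (MvPolynomial (Fin 3) ℂ) (MvPolynomial (Fin 3) ℂ))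
    (n : ℕ) [n.AtLeastTwo] : E (no_index (OfNat.ofNat n)) = 0 := by
  rw [← Nat.cast_ofNat (R := MvPolynomial (Fin 3) ℂ) (n := n)]
  exact Derivation.map_natCast E n

/-- `𝓛₂(p*λ₄) = p*(6λ₆)` and `𝓛₂(p*λ₆) = p*(-(4/3)λ₄²)`, i.e. `𝓛₂` is projectable
for `p` with pushforward `L₂`. -/
theorem L2_projectable : L2 pl4 = 6 * pl6 ∧ L2 pl6 = -(4 / 3 : ℂ) • pl4 ^ 2 := by
  constructor <;>
  · simp only [L2, pl4, pl6, map_add, map_sub, map_neg, map_mul, Derivation.leibniz,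
      Derivation.leibniz_pow, mkDerivation_X, Derivation.map_smul, derivation_map_ofNat,
      Matrix.cons_val_zero, Matrix.cons_val_one, Matrix.head_cons, Matrix.cons_val_two,
      Matrix.tail_cons, smul_zero, mul_zero, zero_mul, add_zero, zero_add, neg_zero, sub_zero]
    apply MvPolynomial.funext
    intro v
    simp [smul_eq_C_mul]
    ring
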